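/- arXiv:2308.08130 — 2 statements merged into one kernel-verified Lean document; each statement's English description precedes it below -/
import Mathlib

section
/- Let (V, ‖·‖) be a real normed vector space, Z a set, u^H, u^L : Z → V, points z, z_1, …, z_K ∈ Z, and c ∈ ℝ^K. Define the bi-fidelity approximation u^B := Σ_{k=1}^K c_k u^H(z_k). Suppose there exist D ≥ 0 and P ≥ 0 such that ‖u^H(z) − u^L(z)‖ ≤ D, ‖u^H(z_k) − u^L(z_k)‖ ≤ D for all k = 1,…,K, and ‖u^L(z) − Σ_{k=1}^K c_k u^L(z_k)‖ ≤ P. Then ‖u^H(z) − u^B‖ ≤ D + P + √K · ‖c‖₂ · D, where ‖c‖₂ = (Σ_k c_k²)^{1/2}. -/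
/-!
Insert the low-fidelity model twice: `u^H(z) - u^B` is the high/low gap at `z`, plus the
low-fidelity projection error, minus `Σ_k c_k (u^H(z_k) - u^L(z_k))`. The first two terms are
bounded by `D` and `P`; the last by `(Σ_k |c_k|) D`, and Cauchy–Schwarz against the constant
vector `1` gives `Σ_k |c_k| ≤ √K ‖c‖₂`.
-/

open Finset

theorem sum_abs_le_sqrt_card_mul_sqrt_sum_sq {ι : Type*} (s : Finset ι) (c : ι → ℝ) :
    ∑ i ∈ s, |c i| ≤ √(#s : ℝ) * √(∑ i ∈ s, c i ^ 2) := by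
  rw [← Real.sqrt_mul (Nat.cast_nonneg _)]
  apply Real.le_sqrt_of_sq_le
  simpa only [sq_abs] using sq_sum_le_card_mul_sum_sq (s := s) (f := fun i => |c i|)

theorem norm_sum_smul_le_sqrt_card_mul_sqrt_sum_sq_mul {ι E : Type*} [SeminormedAddCommGroup E]
    [NormedSpace ℝ E] (s : Finset ι) (c : ι → ℝ) (v : ι → E) {D : ℝ}
    (hv : ∀ i ∈ s, ‖v i‖ ≤ D) (hD : 0 ≤ D) :
    ‖∑ i ∈ s, c i • v i‖ ≤ √(#s : ℝ) * √(∑ i ∈ s, c i ^ 2) * D :=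
  calc ‖∑ i ∈ s, c i • v i‖
      ≤ ∑ i ∈ s, |c i| * D := norm_sum_le_of_le s fun i hi => by
        rw [norm_smul, Real.norm_eq_abs]
        exact mul_le_mul_of_nonneg_left (hv i hi) (abs_nonneg _)
    _ = (∑ i ∈ s, |c i|) * D := (sum_mul ..).symm
    _ ≤ √(#s : ℝ) * √(∑ i ∈ s, c i ^ 2) * D :=
        mul_le_mul_of_nonneg_right (sum_abs_le_sqrt_card_mul_sqrt_sum_sq s c) hD

theorem sub_sum_smul_eq_add_sub_sum_smul_sub {ι E : Type*} [AddCommGroup E] [Module ℝ E]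
    (s : Finset ι) (c : ι → ℝ) (x y : E) (a b : ι → E) :
    x - ∑ i ∈ s, c i • a i
      = (x - y) + (y - ∑ i ∈ s, c i • b i) - ∑ i ∈ s, c i • (a i - b i) := by
  simp only [smul_sub, sum_sub_distrib]
  abel

theorem bifidelity_error_splitting_general
    {V : Type*} [NormedAddCommGroup V] [NormedSpace ℝ V]
    {Z : Type*} (uH uL : Z → V) (K : ℕ) (z : Z) (zk : Fin K → Z)
    (c : Fin K → ℝ) (D P : ℝ)
    (h1 : ‖uH z - uL z‖ ≤ D)
    (h2 : ∀ k, ‖uH (zk k) - uL (zk k)‖ ≤ D)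
    (h3 : ‖uL z - ∑ k, c k • uL (zk k)‖ ≤ P) :
    ‖uH z - ∑ k, c k • uH (zk k)‖
      ≤ D + P + Real.sqrt K * Real.sqrt (∑ k, c k ^ 2) * D := by
  have hgap : ‖∑ k, c k • (uH (zk k) - uL (zk k))‖ ≤ √(K : ℝ) * √(∑ k, c k ^ 2) * D := by
    simpa only [card_univ, Fintype.card_fin] using
      norm_sum_smul_le_sqrt_card_mul_sqrt_sum_sq_mul univ c _ (fun k _ => h2 k)
        ((norm_nonneg _).trans h1)
  rw [sub_sum_smul_eq_add_sub_sum_smul_sub univ c (uH z) (uL z) (fun k => uH (zk k))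
    (fun k => uL (zk k))]
  calc _ ≤ ‖uH z - uL z + (uL z - ∑ k, c k • uL (zk k))‖
          + ‖∑ k, c k • (uH (zk k) - uL (zk k))‖ := norm_sub_le ..
    _ ≤ ‖uH z - uL z‖ + ‖uL z - ∑ k, c k • uL (zk k)‖
          + ‖∑ k, c k • (uH (zk k) - uL (zk k))‖ := by grw [norm_add_le]
    _ ≤ D + P + √(K : ℝ) * √(∑ k, c k ^ 2) * D := by gcongr

/-- Abstract three-term error bound for the bi-fidelity approximation
`u^B = Σ_k c_k u^H(z_k)`: if the high/low fidelity gap is at most `D` at `z`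
and at all selected points `z_k`, and the low-fidelity projection error is at
most `P`, then `‖u^H(z) - u^B‖ ≤ D + P + √K ‖c‖₂ D`. -/
theorem bifidelity_error_splitting
    {V : Type*} [NormedAddCommGroup V] [NormedSpace ℝ V]
    {Z : Type*} (uH uL : Z → V) (K : ℕ) (z : Z) (zk : Fin K → Z)
    (c : Fin K → ℝ) (D P : ℝ) (hD : 0 ≤ D) (hP : 0 ≤ P)
    (h1 : ‖uH z - uL z‖ ≤ D)
    (h2 : ∀ k, ‖uH (zk k) - uL (zk k)‖ ≤ D)
    (h3 : ‖uL z - ∑ k, c k • uL (zk k)‖ ≤ P) :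
    ‖uH z - ∑ k, c k • uH (zk k)‖
      ≤ D + P + Real.sqrt K * Real.sqrt (∑ k, c k ^ 2) * D :=
  bifidelity_error_splitting_general uH uL K z zk c D P h1 h2 h3
end

section
/- Let C > 0. Let E : [0,∞) → ℝ be continuously differentiable with E(t) ≥ 0 for all t, and let G : [0,∞) → ℝ be continuous with G(t) ≥ 0 for all t. Assume E(0) ≤ 1/(16C²) and that for every t ≥ 0: (1/2)·E′(t) ≤ −(1 − 4C²·E(t) − 1/4)·G(t). Then E(t) ≤ 1/(16C²) for all t ≥ 0, the differential inequality E′(t) + G(t) ≤ 0 holds for all t ≥ 0, and E is non-increasing on [0,∞). -/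
/-! While `E < 3/(16C²)` the dissipation factor `1 - 4C²E - 1/4` is nonnegative, so `E` cannot
increase; a fencing argument against the barriers `1/(16C²) + ε t` therefore traps `E` below
`1/(16C²)` for all time. There the factor is at least `1/2`, which gives `E' + G ≤ 0`. -/

open Set Filter Topology

theorem le_of_hasDerivWithinAt_nonpos_of_lt {f f' : ℝ → ℝ} {a c d : ℝ} (hcd : c < d)
    (hf : ∀ x, a ≤ x → HasDerivWithinAt f (f' x) (Ici a) x) (ha : f a ≤ c)
    (hf'_nonpos : ∀ x, a ≤ x → f x < d → f' x ≤ 0) (x : ℝ) (hx : a ≤ x) : f x ≤ c := by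
  have fence : ∀ ε, 0 < ε → ε * (x - a) < d - c → f x ≤ c + ε * (x - a) := by
    intro ε hε hsmall
    refine image_le_of_deriv_right_lt_deriv_boundary (B := fun y ↦ c + ε * (y - a))
      (B' := fun _ ↦ ε) (fun y hy ↦ (hf y hy.1).continuousWithinAt.mono Icc_subset_Ici_self)
      (fun y hy ↦ (hf y hy.1).mono (Ici_subset_Ici.2 hy.1)) (by simpa using ha)
      (fun y ↦ by simpa using ((hasDerivAt_id y).sub_const a).const_mul ε |>.const_add c)
      (fun y hy hfy ↦ ?_) ⟨hx, le_rfl⟩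
    have hfy_lt : f y < d := by
      rw [hfy]
      nlinarith [hy.2]
    exact (hf'_nonpos y hy.1 hfy_lt).trans_lt hε
  have hlim : Tendsto (fun ε ↦ c + ε * (x - a)) (𝓝[>] 0) (𝓝 c) :=
    tendsto_nhdsWithin_of_tendsto_nhds <|
      (by fun_prop : Continuous fun ε : ℝ ↦ c + ε * (x - a)).tendsto' 0 c (by simp)
  refine ge_of_tendsto hlim ?_
  filter_upwards [self_mem_nhdsWithin, hlim.eventually (gt_mem_nhds hcd)] with ε hε hlt
  exact fence ε hε (by linarith)

section DissipationFactor

variable {C e e' g : ℝ}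

theorem four_mul_sq_mul_le_of_le_div {k : ℝ} (hk : 0 ≤ k) (he : e ≤ k / (16 * C ^ 2)) :
    4 * C ^ 2 * e ≤ k / 4 := by
  rcases eq_or_ne C 0 with rfl | hC
  · simpa using div_nonneg hk zero_le_four
  calc 4 * C ^ 2 * e ≤ 4 * C ^ 2 * (k / (16 * C ^ 2)) := by gcongr
    _ = k / 4 := by field_simp; ring

theorem energy_deriv_nonpos_of_le (hg : 0 ≤ g) (he : e ≤ 3 / (16 * C ^ 2))
    (h : (1 / 2) * e' ≤ -(1 - 4 * C ^ 2 * e - 1 / 4) * g) : e' ≤ 0 := by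
  have := four_mul_sq_mul_le_of_le_div (by norm_num) he
  nlinarith

theorem energy_deriv_add_le_zero_of_le (hg : 0 ≤ g) (he : e ≤ 1 / (16 * C ^ 2))
    (h : (1 / 2) * e' ≤ -(1 - 4 * C ^ 2 * e - 1 / 4) * g) : e' + g ≤ 0 := by
  have := four_mul_sq_mul_le_of_le_div zero_le_one he
  nlinarith

end DissipationFactor

theorem energy_bootstrap_general (C : ℝ) (hC : 0 < C) (E E' G : ℝ → ℝ)
    (hE : ∀ t, 0 ≤ t → HasDerivWithinAt E (E' t) (Set.Ici 0) t)
    (hGnonneg : ∀ t, 0 ≤ t → 0 ≤ G t)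
    (hE0 : E 0 ≤ 1 / (16 * C ^ 2))
    (hineq : ∀ t, 0 ≤ t → (1 / 2) * E' t ≤ -(1 - 4 * C ^ 2 * E t - 1 / 4) * G t) :
    (∀ t, 0 ≤ t → E t ≤ 1 / (16 * C ^ 2)) ∧
    (∀ t, 0 ≤ t → E' t + G t ≤ 0) ∧
    (∀ s t, 0 ≤ s → s ≤ t → E t ≤ E s) := by
  have hthreshold : 1 / (16 * C ^ 2) < 3 / (16 * C ^ 2) := by gcongr; norm_num
  have hbound : ∀ t, 0 ≤ t → E t ≤ 1 / (16 * C ^ 2) :=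
    le_of_hasDerivWithinAt_nonpos_of_lt hthreshold hE hE0 fun t ht hEt ↦
      energy_deriv_nonpos_of_le (hGnonneg t ht) hEt.le (hineq t ht)
  have hdiss : ∀ t, 0 ≤ t → E' t + G t ≤ 0 := fun t ht ↦
    energy_deriv_add_le_zero_of_le (hGnonneg t ht) (hbound t ht) (hineq t ht)
  have hanti : AntitoneOn E (Ici 0) :=
    antitoneOn_of_hasDerivWithinAt_nonpos (convex_Ici 0)
      (fun t ht ↦ (hE t ht).continuousWithinAt)
      (fun t ht ↦ (hE t (interior_subset ht)).mono interior_subset)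
      (fun t ht ↦ by
        have ht₀ : (0 : ℝ) ≤ t := interior_subset ht
        linarith [hdiss t ht₀, hGnonneg t ht₀])
  exact ⟨hbound, hdiss, fun s t hs hst ↦ hanti hs (hs.trans hst) hst⟩

/-- Bootstrap/continuity argument for the energy estimate: if `E` is `C¹` on
`[0,∞)`, nonnegative, `G` is continuous and nonnegative on `[0,∞)`,
`E(0) ≤ 1/(16C²)`, and `(1/2)E' ≤ -(1 - 4C²E - 1/4)G` on `[0,∞)`, then
`E(t) ≤ 1/(16C²)` for all `t ≥ 0`, `E' + G ≤ 0` on `[0,∞)`, and `E` is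
non-increasing on `[0,∞)`. -/
theorem energy_bootstrap (C : ℝ) (hC : 0 < C) (E E' G : ℝ → ℝ)
    (hE : ∀ t, 0 ≤ t → HasDerivWithinAt E (E' t) (Set.Ici 0) t)
    (hE'cont : ContinuousOn E' (Set.Ici 0))
    (hEnonneg : ∀ t, 0 ≤ t → 0 ≤ E t)
    (hGcont : ContinuousOn G (Set.Ici 0))
    (hGnonneg : ∀ t, 0 ≤ t → 0 ≤ G t)
    (hE0 : E 0 ≤ 1 / (16 * C ^ 2))
    (hineq : ∀ t, 0 ≤ t → (1 / 2) * E' t ≤ -(1 - 4 * C ^ 2 * E t - 1 / 4) * G t) :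
    (∀ t, 0 ≤ t → E t ≤ 1 / (16 * C ^ 2)) ∧
    (∀ t, 0 ≤ t → E' t + G t ≤ 0) ∧
    (∀ s t, 0 ≤ s → s ≤ t → E t ≤ E s) :=
  energy_bootstrap_general C hC E E' G hE hGnonneg hE0 hineq
end
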